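/- Let G be an AH-algebra, let g ∈ G with spectral bounds L := L_g and U := U_g and spectral resolution (p_λ)_{λ∈ℝ}. Suppose λ₀,λ₁,…,λ_n ∈ ℝ with λ₀ < L < λ₁ < ⋯ < λ_{n−1} < U < λ_n, let γ_i ∈ ℝ with λ_{i−1} ≤ γ_i ≤ λ_i for i = 1,…,n, put u_i := p_{λ_i} − p_{λ_{i−1}}, and let ε := max{λ_i − λ_{i−1} : i = 1,…,n}. Then u₁,…,u_n ∈ P ∩ CC(g), u₁ + u₂ + ⋯ + u_n = 1, and ‖g − Σ_{i=1}^{n} γ_i u_i‖ ≤ ε. -/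

import Mathlib

/-- An e-ring `(R,E)`: an associative ring `R` with unity together with a set `E ⊆ R`
of effects, satisfying the Foulis axioms.  `E⁺` is realized as the additive submonoid
closure of `E` (the set of all finite sums of effects). -/
structure ERing (R : Type*) [Ring R] where
  E : Set R
  zero_mem : (0 : R) ∈ E
  one_mem : (1 : R) ∈ E
  compl_mem : ∀ e ∈ E, 1 - e ∈ E
  epos_i : ∀ a ∈ AddSubmonoid.closure E, -a ∈ AddSubmonoid.closure E → a = 0
  epos_ii : ∀ a ∈ AddSubmonoid.closure E, 1 - a ∈ AddSubmonoid.closure E → a ∈ E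
  epos_iii : ∀ a ∈ AddSubmonoid.closure E, ∀ b ∈ AddSubmonoid.closure E,
    a * b = b * a → a * b ∈ AddSubmonoid.closure E
  epos_iv : ∀ a ∈ AddSubmonoid.closure E, ∀ b ∈ AddSubmonoid.closure E,
    a * b * a ∈ AddSubmonoid.closure E
  epos_v : ∀ a ∈ AddSubmonoid.closure E, ∀ b ∈ AddSubmonoid.closure E,
    a * b * a = 0 → a * b = 0 ∧ b * a = 0
  epos_vi : ∀ a ∈ AddSubmonoid.closure E, ∀ b ∈ AddSubmonoid.closure E,
    (a - b) ^ 2 ∈ AddSubmonoid.closure E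
  zero_ne_one : (0 : R) ≠ 1

namespace ERing

variable {R : Type*} [Ring R] (er : ERing R)

/-- `E⁺`, the set of all finite sums of effects; the positive cone of the directed group. -/
def Epos : Set R := (AddSubmonoid.closure er.E : Set R)

/-- The directed group `G = E⁺ - E⁺` of the e-ring. -/
def G : Set R := {g | ∃ a ∈ er.Epos, ∃ b ∈ er.Epos, g = a - b}

/-- The partial order on the directed group: `g ≤ h` iff `h - g ∈ E⁺`. -/
def le (g h : R) : Prop := h - g ∈ er.Epos

/-- The set of projections `P = {p ∈ G : p = p²}`. -/
def P : Set R := {p | p ∈ er.G ∧ p = p ^ 2}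

/-- The commutant in `G` of a subset `A ⊆ G`. -/
def commutant (A : Set R) : Set R := {g | g ∈ er.G ∧ ∀ a ∈ A, g * a = a * g}

/-- The bicommutant in `G` of a subset `A ⊆ G`. -/
def CC (A : Set R) : Set R := er.commutant (er.commutant A)

/-- `s` is the supremum of `A` within the subset `S` (w.r.t. the e-ring order). -/
def IsSupIn (S A : Set R) (s : R) : Prop :=
  s ∈ S ∧ (∀ a ∈ A, er.le a s) ∧ ∀ b ∈ S, (∀ a ∈ A, er.le a b) → er.le s b

/-- `s` is the infimum of `A` within the subset `S` (w.r.t. the e-ring order). -/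
def IsInfIn (S A : Set R) (s : R) : Prop :=
  s ∈ S ∧ (∀ a ∈ A, er.le s a) ∧ ∀ b ∈ S, (∀ a ∈ A, er.le b a) → er.le b s

/-- Quadratic annihilation property. -/
def HasQA : Prop := ∀ g ∈ er.G, ∀ h ∈ er.G, g * h ^ 2 * g = 0 → g * h = 0 ∧ h * g = 0

/-- Commutative Vigier property: every ascending sequence of pairwise commuting elements
of `G` bounded above in `G` has a supremum in `G` which double commutes with the sequence. -/
def HasCV : Prop :=
  ∀ g : ℕ → R, (∀ n, g n ∈ er.G) → (∀ n, er.le (g n) (g (n + 1))) →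
    (∀ m n, g m * g n = g n * g m) → (∃ b ∈ er.G, ∀ n, er.le (g n) b) →
    ∃ s, er.IsSupIn er.G (Set.range g) s ∧ s ∈ er.CC (Set.range g)

/-- `G` is an abstract Hermitian (AH) algebra: there is a semitransparent effect `½`,
`G` has quadratic annihilation, and `G` has the commutative Vigier property. -/
def IsAH : Prop := (∃ h ∈ er.E, h + h = 1) ∧ er.HasQA ∧ er.HasCV

end ERing

namespace ERing

variable {R : Type*} [Ring R] (er : ERing R)

/-- `m` is the absolute value `|g| = (g²)^(1/2)` of `g`: `m ∈ G`, `0 ≤ m`, `m² = g²`. -/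
def IsAbs (g m : R) : Prop := m ∈ er.G ∧ er.le 0 m ∧ m ^ 2 = g ^ 2

/-- `a` is the positive part `g⁺ = ½(|g| + g)` of `g`, i.e. `a ∈ G` and `a + a = |g| + g`. -/
def IsPosPart (g a : R) : Prop := a ∈ er.G ∧ ∃ m, er.IsAbs g m ∧ a + a = m + g

/-- `b` is the negative part `g⁻ = ½(|g| − g)` of `g`, i.e. `b ∈ G` and `b + b = |g| − g`. -/
def IsNegPart (g b : R) : Prop := b ∈ er.G ∧ ∃ m, er.IsAbs g m ∧ b + b = m - g

/-- `p` is the carrier projection `g°` of `g`. -/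
def IsCarrier (g p : R) : Prop := p ∈ er.P ∧ ∀ h ∈ er.G, (g * h = 0 ↔ p * h = 0)

end ERing

namespace ERing

variable {R : Type*} [Ring R] [Algebra ℝ R] (er : ERing R)

/-- The 1-norm `‖g‖ = inf {λ : 0 ≤ λ, −λ·1 ≤ g ≤ λ·1}`. -/
noncomputable def norm1 (g : R) : ℝ :=
  sInf {l : ℝ | 0 ≤ l ∧ er.le (-(l • (1 : R))) g ∧ er.le g (l • (1 : R))}

/-- The spectral lower bound `L_g = sup {λ : λ·1 ≤ g}`. -/
noncomputable def specL (g : R) : ℝ := sSup {l : ℝ | er.le (l • (1 : R)) g}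

/-- The spectral upper bound `U_g = inf {λ : g ≤ λ·1}`. -/
noncomputable def specU (g : R) : ℝ := sInf {l : ℝ | er.le g (l • (1 : R))}

/-- `p` is the spectral projection `p_{g,λ} = 1 − ((g − λ·1)⁺)°`. -/
def IsSpecProj (g : R) (l : ℝ) (p : R) : Prop :=
  ∃ a, er.IsPosPart (g - l • (1 : R)) a ∧ ∃ q, er.IsCarrier a q ∧ p = 1 - q

/-- `d` is the λ-eigenprojection `d_{g,λ} = 1 − (g − λ·1)°`. -/
def IsEigenProj (g : R) (l : ℝ) (d : R) : Prop :=
  ∃ q, er.IsCarrier (g - l • (1 : R)) q ∧ d = 1 - q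

end ERing

/-!
Write `h_λ = g - λ`, so that `p_λ = 1 - q_λ` with `q_λ` the carrier of `h_λ⁺`. Positive square
roots exist (the supremum, by the Vigier property, of the increasing iteration
`s ↦ s + (x - s²) / 2`) and are unique, so `|h_λ|`, `h_λ⁺`, `h_λ⁻` and `q_λ` all commute with
everything that commutes with `g`. For `λ ≤ μ` a positivity computation gives `q_μ ≤ q_λ`, so
`u = p_μ - p_λ = q_λ - q_μ` is a projection in `CC(g)`, and `λ u ≤ g u ≤ μ u` because
`h_λ u = h_λ⁺ u ≥ 0` and `h_μ u = -h_μ⁻ u ≤ 0`. Below `L` the resolution is `0` and above `U` it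
is `1`, so the `u_i` telescope to `1`, and summing `(γ_i - ε) u_i ≤ g u_i ≤ (γ_i + ε) u_i` gives
`-ε ≤ g - ∑ γ_i u_i ≤ ε`.
-/

namespace ERing

open Polynomial

section Cone

variable {R : Type*} [Ring R] {er : ERing R} {a b x y : R}

theorem zero_mem_Epos : (0 : R) ∈ er.Epos := (AddSubmonoid.closure er.E).zero_mem

theorem add_mem_Epos (ha : a ∈ er.Epos) (hb : b ∈ er.Epos) : a + b ∈ er.Epos :=
  (AddSubmonoid.closure er.E).add_mem ha hb

theorem sum_mem_Epos {ι : Type*} {s : Finset ι} {f : ι → R} (h : ∀ i ∈ s, f i ∈ er.Epos) :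
    ∑ i ∈ s, f i ∈ er.Epos :=
  AddSubmonoid.sum_mem _ h

theorem mem_Epos_of_mem_E (ha : a ∈ er.E) : a ∈ er.Epos := AddSubmonoid.subset_closure ha

theorem one_mem_Epos : (1 : R) ∈ er.Epos := mem_Epos_of_mem_E er.one_mem

theorem le.trans {z : R} (hxy : er.le x y) (hyz : er.le y z) : er.le x z := by
  simpa [le] using add_mem_Epos hyz hxy

theorem eq_zero_of_mem_Epos_of_neg_mem (ha : a ∈ er.Epos) (h : -a ∈ er.Epos) : a = 0 :=
  er.epos_i a ha h

theorem eq_zero_of_add_eq_zero (ha : a ∈ er.Epos) (hb : b ∈ er.Epos) (h : a + b = 0) :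
    a = 0 ∧ b = 0 := by
  have ha0 : a = 0 := eq_zero_of_mem_Epos_of_neg_mem ha (neg_eq_of_add_eq_zero_right h ▸ hb)
  exact ⟨ha0, by simpa [ha0] using h⟩

theorem mul_mem_Epos (ha : a ∈ er.Epos) (hb : b ∈ er.Epos) (h : Commute a b) :
    a * b ∈ er.Epos :=
  er.epos_iii a ha b hb h

theorem mul_mul_self_mem_Epos (ha : a ∈ er.Epos) (hb : b ∈ er.Epos) : a * b * a ∈ er.Epos :=
  er.epos_iv a ha b hb

theorem mem_G_of_mem_Epos (ha : a ∈ er.Epos) : a ∈ er.G := ⟨a, ha, 0, zero_mem_Epos, by simp⟩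

theorem one_mem_G : (1 : R) ∈ er.G := mem_G_of_mem_Epos one_mem_Epos

theorem add_mem_G (hx : x ∈ er.G) (hy : y ∈ er.G) : x + y ∈ er.G := by
  obtain ⟨a, ha, b, hb, rfl⟩ := hx
  obtain ⟨c, hc, d, hd, rfl⟩ := hy
  exact ⟨a + c, add_mem_Epos ha hc, b + d, add_mem_Epos hb hd, by abel⟩

theorem neg_mem_G (hx : x ∈ er.G) : -x ∈ er.G := by
  obtain ⟨a, ha, b, hb, rfl⟩ := hx
  exact ⟨b, hb, a, ha, by abel⟩

theorem sub_mem_G (hx : x ∈ er.G) (hy : y ∈ er.G) : x - y ∈ er.G :=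
  sub_eq_add_neg x y ▸ add_mem_G hx (neg_mem_G hy)

theorem mul_self_mem_Epos (hx : x ∈ er.G) : x * x ∈ er.Epos := by
  obtain ⟨a, ha, b, hb, rfl⟩ := hx
  exact pow_two (a - b) ▸ er.epos_vi a ha b hb

theorem mul_add_mul_mem_G (hx : x ∈ er.G) (hy : y ∈ er.G) : x * y + y * x ∈ er.G := by
  have h := sub_mem_G (sub_mem_G (mem_G_of_mem_Epos (mul_self_mem_Epos (add_mem_G hx hy)))
    (mem_G_of_mem_Epos (mul_self_mem_Epos hx))) (mem_G_of_mem_Epos (mul_self_mem_Epos hy))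
  rwa [show (x + y) * (x + y) - x * x - y * y = x * y + y * x by noncomm_ring] at h

theorem mem_Epos_of_isIdempotentElem (hx : x ∈ er.G) (h : IsIdempotentElem x) : x ∈ er.Epos :=
  h.eq ▸ mul_self_mem_Epos hx

theorem mul_self_sub_mul_self_mem_Epos {k s : R} (hs : s ∈ er.Epos) (hks : k - s ∈ er.Epos)
    (h : Commute k s) : k * k - s * s ∈ er.Epos := by
  have hsum : k + s ∈ er.Epos := by
    simpa using add_mem_Epos (add_mem_Epos hks hs) hs
  have e : (k - s) * (k + s) = k * k - s * s := by
    rw [sub_mul, mul_add, mul_add, h.eq]; abel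
  exact e ▸ mul_mem_Epos hks hsum
    (((Commute.refl k).add_right h).sub_left (h.symm.add_right (Commute.refl s)))

theorem HasQA.eq_zero_of_mul_self_eq_zero (hQA : er.HasQA) (hx : x ∈ er.G) (h : x * x = 0) :
    x = 0 := by
  simpa using (hQA 1 one_mem_G x hx (by simp [pow_two, h])).1

theorem HasQA.mul_eq_zero_comm (hQA : er.HasQA) (hx : x ∈ er.G) (hy : y ∈ er.G)
    (h : x * y = 0) : y * x = 0 :=
  (hQA x hx y hy (by rw [pow_two, ← mul_assoc, h]; simp)).2

theorem HasQA.eq_of_mul_self_eq (hQA : er.HasQA) {m k : R} (hm : m ∈ er.Epos) (hk : k ∈ er.Epos)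
    (h : Commute m k) (hmk : m * m = k * k) : m = k := by
  set d := m - k with hd
  have hdG : d ∈ er.G := sub_mem_G (mem_G_of_mem_Epos hm) (mem_G_of_mem_Epos hk)
  have hdm : Commute d m := (Commute.refl m).sub_left h.symm
  have hdk : Commute d k := h.sub_left (Commute.refl k)
  have hd_add : d * (m + k) = 0 := by
    rw [hd, sub_mul, mul_add, mul_add, h.eq, hmk]; abel
  obtain ⟨hddm, hddk⟩ := eq_zero_of_add_eq_zero
    (mul_mem_Epos (mul_self_mem_Epos hdG) hm (hdm.mul_left hdm))
    (mul_mem_Epos (mul_self_mem_Epos hdG) hk (hdk.mul_left hdk))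
    (by rw [← mul_add, mul_assoc, hd_add, mul_zero])
  have hddd : d * d * d = 0 := by rw [hd, mul_sub, ← hd, hddm, hddk, sub_zero]
  have hdd : d * d = 0 := hQA.eq_zero_of_mul_self_eq_zero
    (mem_G_of_mem_Epos (mul_self_mem_Epos hdG)) (by rw [← mul_assoc, hddd, zero_mul])
  exact sub_eq_zero.1 (hQA.eq_zero_of_mul_self_eq_zero hdG hdd)

end Cone

section OrderUnit

variable {R : Type*} [Ring R] [Module ℝ R] {er : ERing R} {a x : R}

theorem exists_smul_one_sub_mem_Epos (ha : a ∈ er.Epos) :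
    ∃ K : ℝ, 0 ≤ K ∧ K • (1 : R) - a ∈ er.Epos := by
  induction ha using AddSubmonoid.closure_induction with
  | mem e he => exact ⟨1, zero_le_one, by simpa using mem_Epos_of_mem_E (er.compl_mem e he)⟩
  | zero => exact ⟨0, le_rfl, by simpa using zero_mem_Epos⟩
  | add x y _ _ hx hy =>
    obtain ⟨K₁, hK₁, h₁⟩ := hx
    obtain ⟨K₂, hK₂, h₂⟩ := hy
    refine ⟨K₁ + K₂, by linarith, ?_⟩
    rw [show (K₁ + K₂) • (1 : R) - (x + y) = (K₁ • 1 - x) + (K₂ • 1 - y) by rw [add_smul]; abel]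
    exact add_mem_Epos h₁ h₂

theorem exists_le_smul_one (hx : x ∈ er.G) : ∃ K : ℝ, er.le x (K • 1) := by
  obtain ⟨a, ha, b, hb, rfl⟩ := hx
  obtain ⟨K, -, hK⟩ := exists_smul_one_sub_mem_Epos ha
  exact ⟨K, by simpa [le, sub_sub_eq_add_sub, add_sub_right_comm] using add_mem_Epos hK hb⟩

theorem exists_smul_one_le (hx : x ∈ er.G) : ∃ K : ℝ, er.le (K • 1) x := by
  obtain ⟨K, hK⟩ := exists_le_smul_one (neg_mem_G hx)
  exact ⟨-K, by simpa [le, add_comm] using hK⟩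

end OrderUnit

section RealCone

variable {R : Type*} [Ring R] [Module ℝ R]

def IsRealCone (er : ERing R) : Prop := ∀ l : ℝ, 0 ≤ l → ∀ a ∈ er.Epos, l • a ∈ er.Epos

variable {er : ERing R} {a x y : R} {l : ℝ}

namespace IsRealCone

variable (hscal : er.IsRealCone)
include hscal

theorem smul_mem_Epos (hl : 0 ≤ l) (ha : a ∈ er.Epos) : l • a ∈ er.Epos := hscal l hl a ha

theorem mem_Epos_of_smul_mem (hl : 0 < l) (ha : l • a ∈ er.Epos) : a ∈ er.Epos := by
  simpa [smul_smul, inv_mul_cancel₀ hl.ne'] using hscal.smul_mem_Epos (inv_nonneg.2 hl.le) ha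

theorem smul_mem_G (l : ℝ) (hx : x ∈ er.G) : l • x ∈ er.G := by
  obtain ⟨a, ha, b, hb, rfl⟩ := hx
  rcases le_or_gt 0 l with hl | hl
  · exact ⟨l • a, hscal.smul_mem_Epos hl ha, l • b, hscal.smul_mem_Epos hl hb, smul_sub l a b⟩
  · refine ⟨(-l) • b, hscal.smul_mem_Epos (by linarith) hb,
      (-l) • a, hscal.smul_mem_Epos (by linarith) ha, ?_⟩
    simp only [neg_smul, smul_sub]
    abel

theorem mul_mem_G (hx : x ∈ er.G) (hy : y ∈ er.G) (h : Commute x y) : x * y ∈ er.G := by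
  have h2 := hscal.smul_mem_G (1 / 2 : ℝ) (mul_add_mul_mem_G hx hy)
  rwa [← h.eq, show (1 / 2 : ℝ) • (x * y + x * y) = x * y by module] at h2

theorem smul_le_smul {c c' : ℝ} (hc : c ≤ c') (ha : a ∈ er.Epos) : er.le (c • a) (c' • a) := by
  rw [le, ← sub_smul]
  exact hscal.smul_mem_Epos (sub_nonneg.2 hc) ha

theorem le_sub_half_smul_mul_self_sub {k s v : R} (hks : Commute k s) (hsk : k - s ∈ er.Epos)
    (hk₁ : 1 - k ∈ er.Epos) (hs₁ : 1 - s ∈ er.Epos) (hsv : v - s * s ∈ er.Epos) :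
    er.le s (k - (1 / 2 : ℝ) • (k * k - v)) := by
  have e : (k - (1 / 2 : ℝ) • (k * k - v)) - s
      = (1 / 2 : ℝ) • (((1 - k) + (1 - s)) * (k - s) + (v - s * s)) := by
    simp only [add_mul, sub_mul, mul_sub, one_mul]
    rw [hks.eq]
    module
  have c₁ : Commute 1 (k - s) := Commute.one_left _
  have hc : Commute ((1 - k) + (1 - s)) (k - s) :=
    (c₁.sub_left ((Commute.refl k).sub_right hks)).add_left
      (c₁.sub_left (hks.symm.sub_right (Commute.refl s)))
  rw [le, e]
  exact hscal.smul_mem_Epos (by norm_num)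
    (add_mem_Epos (mul_mem_Epos (add_mem_Epos hk₁ hs₁) hsk hc) hsv)

end IsRealCone

end RealCone

section Archimedean

variable {R : Type*} [Ring R] [Algebra ℝ R] {er : ERing R}

theorem HasCV.eq_zero_of_forall_smul_le (hCV : er.HasCV) (hscal : er.IsRealCone) {x : R}
    (hx : x ∈ er.Epos) (c : ℝ) (h : ∀ n : ℕ, er.le ((n : ℝ) • x) (c • 1)) : x = 0 := by
  have hxG := mem_G_of_mem_Epos hx
  have hstep : ∀ n : ℕ, ((n + 1 : ℕ) : ℝ) • x - (n : ℝ) • x = x := fun n => by push_cast; module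
  obtain ⟨s, ⟨hsG, hub, hleast⟩, -⟩ := hCV (fun n => (n : ℝ) • x)
    (fun n => hscal.smul_mem_G _ hxG) (fun n => by rw [le, hstep]; exact hx)
    (fun m n => ((Commute.refl x).smul_left _).smul_right _)
    ⟨c • 1, hscal.smul_mem_G c one_mem_G, h⟩
  have hsx : er.le s (s - x) := hleast _ (sub_mem_G hsG hxG) <| by
    rintro _ ⟨n, rfl⟩
    have hn : er.le (((n + 1 : ℕ) : ℝ) • x) s := hub _ ⟨n + 1, rfl⟩
    show (s - x) - (n : ℝ) • x ∈ er.Epos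
    rwa [show (s - x) - (n : ℝ) • x = s - ((n + 1 : ℕ) : ℝ) • x by push_cast; module]
  exact eq_zero_of_mem_Epos_of_neg_mem hx (by simpa [le] using hsx)

end Archimedean

theorem commute_aeval_of_commute {S A : Type*} [CommSemiring S] [Semiring A] [Algebra S A]
    {z v : A} (hz : Commute z v) (P : S[X]) : Commute z (aeval v P) := by
  induction P using Polynomial.induction_on' with
  | add P Q hP hQ => rw [map_add]; exact hP.add_right hQ
  | monomial n a =>
    rw [aeval_monomial]
    exact (Algebra.commute_algebraMap_left a z).symm.mul_right (hz.pow_right n)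

/-- Evaluated at `0 ≤ x ≤ 1`, increases to `√x`. -/
noncomputable def sqrtIter : ℕ → ℝ[X]
  | 0 => 0
  | n + 1 => sqrtIter n + C (1 / 2) * (X - sqrtIter n ^ 2)

theorem X_sub_sqrtIter_succ_sq (n : ℕ) :
    X - sqrtIter (n + 1) ^ 2 = (X - sqrtIter n ^ 2) *
      (C (1 / 2) * ((1 - sqrtIter n) ^ 2 + (1 - X)) + C (1 / 4) * (X - sqrtIter n ^ 2)) := by
  refine Polynomial.funext fun r => ?_
  simp only [sqrtIter, eval_sub, eval_mul, eval_add, eval_pow, eval_C, eval_X, eval_one]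
  ring

theorem one_sub_sqrtIter_succ (n : ℕ) :
    1 - sqrtIter (n + 1) = C (1 / 2) * ((1 - sqrtIter n) ^ 2 + (1 - X)) := by
  refine Polynomial.funext fun r => ?_
  simp only [sqrtIter, eval_sub, eval_mul, eval_add, eval_pow, eval_C, eval_X, eval_one]
  ring

section SquareRoot

variable {R : Type*} [Ring R] [Algebra ℝ R] {er : ERing R} {v : R}

namespace IsRealCone

variable (hscal : er.IsRealCone)
include hscal

theorem pow_mem_G (hv : v ∈ er.G) (n : ℕ) : v ^ n ∈ er.G := by
  induction n with
  | zero => simpa using one_mem_G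
  | succ n ih => rw [pow_succ]; exact hscal.mul_mem_G ih hv ((Commute.refl v).pow_left n)

theorem aeval_mem_G (hv : v ∈ er.G) (P : ℝ[X]) : aeval v P ∈ er.G := by
  induction P using Polynomial.induction_on' with
  | add P Q hP hQ => rw [map_add]; exact add_mem_G hP hQ
  | monomial n a =>
    rw [aeval_monomial, ← Algebra.smul_def]
    exact hscal.smul_mem_G a (hscal.pow_mem_G hv n)

theorem aeval_C_mul_mem_Epos {a : ℝ} (ha : 0 ≤ a) {P : ℝ[X]} (hP : aeval v P ∈ er.Epos) :
    aeval v (C a * P) ∈ er.Epos := by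
  rw [map_mul, aeval_C, ← Algebra.smul_def]
  exact hscal.smul_mem_Epos ha hP

theorem sqrtIter_bounds (hv₀ : v ∈ er.Epos) (hv₁ : 1 - v ∈ er.Epos) (n : ℕ) :
    aeval v (X - sqrtIter n ^ 2) ∈ er.Epos ∧ aeval v (1 - sqrtIter n) ∈ er.Epos ∧
      aeval v (sqrtIter n) ∈ er.Epos := by
  have hvG := mem_G_of_mem_Epos hv₀
  have mul_mem {P Q : ℝ[X]} (hP : aeval v P ∈ er.Epos) (hQ : aeval v Q ∈ er.Epos) :
      aeval v (P * Q) ∈ er.Epos :=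
    map_mul (aeval v) P Q ▸ mul_mem_Epos hP hQ ((Commute.all P Q).map (aeval v))
  induction n with
  | zero => simpa [sqrtIter] using ⟨hv₀, one_mem_Epos, zero_mem_Epos⟩
  | succ n ih =>
    obtain ⟨hT, -, hS⟩ := ih
    have hhalf : aeval v (C (1 / 2) * ((1 - sqrtIter n) ^ 2 + (1 - X))) ∈ er.Epos := by
      refine hscal.aeval_C_mul_mem_Epos (by norm_num) ?_
      rw [map_add, map_pow, pow_two]
      exact add_mem_Epos (mul_self_mem_Epos (hscal.aeval_mem_G hvG _)) (by simpa using hv₁)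
    refine ⟨?_, one_sub_sqrtIter_succ n ▸ hhalf, ?_⟩
    · rw [X_sub_sqrtIter_succ_sq]
      refine mul_mem hT ?_
      rw [map_add]
      exact add_mem_Epos hhalf (hscal.aeval_C_mul_mem_Epos (by norm_num) hT)
    · rw [sqrtIter, map_add]
      exact add_mem_Epos hS (hscal.aeval_C_mul_mem_Epos (by norm_num) hT)

end IsRealCone

theorem HasCV.exists_sqrt_of_le_one (hCV : er.HasCV) (hscal : er.IsRealCone)
    (hv₀ : v ∈ er.Epos) (hv₁ : 1 - v ∈ er.Epos) :
    ∃ k ∈ er.Epos, k * k = v ∧ ∀ z ∈ er.G, Commute z v → Commute z k := by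
  have hvG := mem_G_of_mem_Epos hv₀
  set s : ℕ → R := fun n => aeval v (sqrtIter n) with hs
  have hsG n : s n ∈ er.G := hscal.aeval_mem_G hvG _
  have hs_comm m n : Commute (s m) (s n) := (Commute.all _ _).map (aeval v)
  have hT n : v - s n * s n ∈ er.Epos := by
    simpa [pow_two] using (hscal.sqrtIter_bounds hv₀ hv₁ n).1
  have hs₁ n : 1 - s n ∈ er.Epos := by simpa using (hscal.sqrtIter_bounds hv₀ hv₁ n).2.1
  have hs₀ n : s n ∈ er.Epos := (hscal.sqrtIter_bounds hv₀ hv₁ n).2.2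
  have hstep n : s (n + 1) = s n + (1 / 2 : ℝ) • (v - s n * s n) := by
    simp [hs, sqrtIter, Algebra.smul_def, pow_two]
  obtain ⟨k, ⟨hkG, hsk, hk_least⟩, hkCC⟩ := hCV s hsG
    (fun n => by
      rw [le, hstep, add_sub_cancel_left]
      exact hscal.smul_mem_Epos (by norm_num) (hT n))
    (fun m n => (hs_comm m n).eq) ⟨1, one_mem_G, hs₁⟩
  have hk_sub n : k - s n ∈ er.Epos := hsk _ ⟨n, rfl⟩
  have hks n : Commute k (s n) := hkCC.2 (s n) ⟨hsG n, by rintro _ ⟨m, rfl⟩; exact hs_comm n m⟩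
  have hk₀ : k ∈ er.Epos := by simpa [hs, sqrtIter] using hk_sub 0
  have hk₁ : 1 - k ∈ er.Epos := hk_least 1 one_mem_G (by rintro _ ⟨n, rfl⟩; exact hs₁ n)
  -- Every `s n` lies below `k - (k² - v) / 2`, hence so does the supremum `k`.
  have hw : v - k * k ∈ er.Epos := by
    have hle := hk_least _ (sub_mem_G hkG (hscal.smul_mem_G _
      (sub_mem_G (mem_G_of_mem_Epos (mul_self_mem_Epos hkG)) hvG))) <| by
        rintro _ ⟨n, rfl⟩
        exact hscal.le_sub_half_smul_mul_self_sub (hks n) (hk_sub n) hk₁ (hs₁ n) (hT n)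
    rw [le, show k - (1 / 2 : ℝ) • (k * k - v) - k = (1 / 2 : ℝ) • (v - k * k) by module] at hle
    exact hscal.mem_Epos_of_smul_mem (by norm_num) hle
  -- Conversely `s n ≥ (n / 2) (v - k²)`, so `n (v - k²) ≤ 2` for all `n`.
  have hgrow n : s n - ((n : ℝ) / 2) • (v - k * k) ∈ er.Epos := by
    induction n with
    | zero => simpa [hs, sqrtIter] using zero_mem_Epos
    | succ n ih =>
      rw [hstep, show s n + (1 / 2 : ℝ) • (v - s n * s n) - ((n + 1 : ℕ) / 2 : ℝ) • (v - k * k)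
          = (s n - ((n : ℝ) / 2) • (v - k * k)) + (1 / 2 : ℝ) • (k * k - s n * s n) by
        push_cast; module]
      exact add_mem_Epos ih (hscal.smul_mem_Epos (by norm_num)
        (mul_self_sub_mul_self_mem_Epos (hs₀ n) (hk_sub n) (hks n)))
  have hw₀ : v - k * k = 0 := hCV.eq_zero_of_forall_smul_le hscal hw 2 fun n => by
    rw [le, show (2 : ℝ) • (1 : R) - (n : ℝ) • (v - k * k)
        = (2 : ℝ) • ((1 - s n) + (s n - ((n : ℝ) / 2) • (v - k * k))) by module]
    exact hscal.smul_mem_Epos (by norm_num) (add_mem_Epos (hs₁ n) (hgrow n))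
  exact ⟨k, hk₀, (sub_eq_zero.1 hw₀).symm, fun z hz hzv =>
    (hkCC.2 z ⟨hz, by rintro _ ⟨n, rfl⟩; exact commute_aeval_of_commute hzv _⟩).symm⟩

theorem HasCV.exists_sqrt (hCV : er.HasCV) (hscal : er.IsRealCone) {x : R} (hx : x ∈ er.Epos) :
    ∃ k ∈ er.Epos, k * k = x ∧ ∀ z ∈ er.G, Commute z x → Commute z k := by
  obtain ⟨K, hK, hKx⟩ := exists_smul_one_sub_mem_Epos hx
  have hc : 0 < K + 1 := by linarith
  have hv₁ : 1 - (K + 1)⁻¹ • x ∈ er.Epos := by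
    have e : (K + 1)⁻¹ • ((K • (1 : R) - x) + 1)
        = (K + 1)⁻¹ • ((K + 1) • (1 : R)) - (K + 1)⁻¹ • x := by
      module
    rw [smul_smul, inv_mul_cancel₀ hc.ne', one_smul] at e
    exact e ▸ hscal.smul_mem_Epos (by positivity) (add_mem_Epos hKx one_mem_Epos)
  obtain ⟨k, hk₀, hkk, hk⟩ :=
    hCV.exists_sqrt_of_le_one hscal (hscal.smul_mem_Epos (by positivity) hx) hv₁
  refine ⟨√(K + 1) • k, hscal.smul_mem_Epos (Real.sqrt_nonneg _) hk₀, ?_, fun z hz hzx =>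
    (hk z hz (hzx.smul_right _)).smul_right _⟩
  rw [smul_mul_smul_comm, Real.mul_self_sqrt hc.le, hkk, smul_smul, mul_inv_cancel₀ hc.ne',
    one_smul]

theorem commute_of_mul_self_eq (hQA : er.HasQA) (hCV : er.HasCV) (hscal : er.IsRealCone)
    {h m z : R} (hh : h ∈ er.G) (hm : m ∈ er.Epos) (hmh : m * m = h * h) (hz : z ∈ er.G)
    (hzh : Commute z h) : Commute z m := by
  obtain ⟨k, hk₀, hkk, hk⟩ := hCV.exists_sqrt hscal (mul_self_mem_Epos hh)
  have hmk : Commute m k :=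
    hk m (mem_G_of_mem_Epos hm) (hmh ▸ (Commute.refl m).mul_right (Commute.refl m))
  rw [hQA.eq_of_mul_self_eq hm hk₀ hmk (hmh.trans hkk.symm)]
  exact hk z hz (hzh.mul_right hzh)

end SquareRoot

section Carrier

variable {R : Type*} [Ring R] {er : ERing R} {a b h q z : R}

theorem isIdempotentElem_of_mem_P (hq : q ∈ er.P) : IsIdempotentElem q := (pow_two q ▸ hq.2).symm

theorem mem_P_of_isIdempotentElem (hq : q ∈ er.G) (h : IsIdempotentElem q) : q ∈ er.P :=
  ⟨hq, by rw [pow_two, h.eq]⟩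

theorem mem_Epos_of_mem_P (hq : q ∈ er.P) : q ∈ er.Epos :=
  mem_Epos_of_isIdempotentElem hq.1 (isIdempotentElem_of_mem_P hq)

namespace IsCarrier

variable (hq : er.IsCarrier a q)
include hq

theorem mem_G : q ∈ er.G := hq.1.1

theorem isIdempotentElem : IsIdempotentElem q := isIdempotentElem_of_mem_P hq.1

theorem one_sub_mem_G : 1 - q ∈ er.G := sub_mem_G one_mem_G hq.mem_G

theorem mem_Epos : q ∈ er.Epos := mem_Epos_of_isIdempotentElem hq.mem_G hq.isIdempotentElem

theorem one_sub_mem_Epos : 1 - q ∈ er.Epos :=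
  mem_Epos_of_isIdempotentElem hq.one_sub_mem_G hq.isIdempotentElem.one_sub

theorem mul_one_sub_eq_zero : a * (1 - q) = 0 :=
  (hq.2 _ hq.one_sub_mem_G).2 hq.isIdempotentElem.mul_one_sub_self

theorem mul_eq_self : a * q = a := by
  simpa [mul_sub, sub_eq_zero, eq_comm] using hq.mul_one_sub_eq_zero

theorem one_sub_mul_eq_zero (hQA : er.HasQA) (ha : a ∈ er.G) : (1 - q) * a = 0 :=
  hQA.mul_eq_zero_comm ha hq.one_sub_mem_G hq.mul_one_sub_eq_zero

theorem self_mul_eq (hQA : er.HasQA) (ha : a ∈ er.G) : q * a = a := by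
  simpa [sub_mul, sub_eq_zero, eq_comm] using hq.one_sub_mul_eq_zero hQA ha

/-- `a` kills `j = z (1 - q) + (1 - q) z`, hence so does `q`, on both sides. -/
theorem commute (hQA : er.HasQA) (hz : z ∈ er.G) (hza : Commute z a) : Commute z q := by
  set j := z * (1 - q) + (1 - q) * z
  have hjG : j ∈ er.G := mul_add_mul_mem_G hz hq.one_sub_mem_G
  have hqj : q * j = 0 := (hq.2 j hjG).1 <| by
    rw [mul_add, ← mul_assoc, ← hza.eq, mul_assoc, hq.mul_one_sub_eq_zero, ← mul_assoc,
      hq.mul_one_sub_eq_zero]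
    simp
  have hjq : j * q = 0 := hQA.mul_eq_zero_comm hq.mem_G hjG hqj
  have h₁ : q * z = q * z * q := by
    rw [mul_add, ← mul_assoc, ← mul_assoc, hq.isIdempotentElem.mul_one_sub_self, zero_mul,
      add_zero, mul_sub, mul_one, sub_eq_zero] at hqj
    exact hqj
  have h₂ : z * q = q * z * q := by
    rw [add_mul, mul_assoc, hq.isIdempotentElem.one_sub_mul_self, mul_zero, zero_add, sub_mul,
      one_mul, sub_mul, sub_eq_zero] at hjq
    exact hjq
  exact h₂.trans h₁.symm

/-- The carrier splits `a + b` into `q (a + b) q = a` and `(1 - q) (a + b) (1 - q) = b`. -/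
theorem mem_Epos_of_mul_eq_zero (hQA : er.HasQA) (ha : a ∈ er.G) (hb : b ∈ er.G)
    (hab : a * b = 0) (hpos : a + b ∈ er.Epos) : a ∈ er.Epos ∧ b ∈ er.Epos := by
  have hqb : q * b = 0 := (hq.2 b hb).1 hab
  have hbq : b * q = 0 := hQA.mul_eq_zero_comm hq.mem_G hb hqb
  constructor
  · have e : q * (a + b) * q = a := by
      rw [mul_add, hqb, hq.self_mul_eq hQA ha, add_zero, hq.mul_eq_self]
    exact e ▸ mul_mul_self_mem_Epos hq.mem_Epos hpos
  · have e : (1 - q) * (a + b) * (1 - q) = b := by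
      rw [mul_add, hq.one_sub_mul_eq_zero hQA ha, zero_add, sub_mul, one_mul, hqb, sub_zero,
        mul_sub, mul_one, hbq, sub_zero]
    exact e ▸ mul_mul_self_mem_Epos hq.one_sub_mem_Epos hpos

end IsCarrier

/-- `h = a - b` with `a = h⁺`, `b = h⁻`, and `q = (h⁺)°`. -/
structure IsJordanDecomp (er : ERing R) (h a b q : R) : Prop where
  pos_mem : a ∈ er.Epos
  neg_mem : b ∈ er.Epos
  sub_eq : a - b = h
  mul_eq_zero : a * b = 0
  carrier : er.IsCarrier a q
  commute_pos : ∀ z ∈ er.G, Commute z h → Commute z a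

namespace IsJordanDecomp

variable (d : er.IsJordanDecomp h a b q)
include d

theorem commute_neg (hz : z ∈ er.G) (hzh : Commute z h) : Commute z b := by
  simpa [← d.sub_eq] using (d.commute_pos z hz hzh).sub_right hzh

theorem commute_proj (hQA : er.HasQA) (hz : z ∈ er.G) (hzh : Commute z h) : Commute z q :=
  d.carrier.commute hQA hz (d.commute_pos z hz hzh)

theorem mem_G : h ∈ er.G :=
  d.sub_eq ▸ sub_mem_G (mem_G_of_mem_Epos d.pos_mem) (mem_G_of_mem_Epos d.neg_mem)

theorem pos_commute : Commute a h := (d.commute_pos h d.mem_G (Commute.refl h)).symm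

theorem neg_commute : Commute b h := (d.commute_neg d.mem_G (Commute.refl h)).symm

theorem proj_mul_neg : q * b = 0 := (d.carrier.2 b (mem_G_of_mem_Epos d.neg_mem)).1 d.mul_eq_zero

theorem neg_mul_proj (hQA : er.HasQA) : b * q = 0 :=
  hQA.mul_eq_zero_comm d.carrier.mem_G (mem_G_of_mem_Epos d.neg_mem) d.proj_mul_neg

end IsJordanDecomp

end Carrier

section Spectral

variable {R : Type*} [Ring R] [Algebra ℝ R] {er : ERing R} {g h z : R} {l : ℝ}

theorem commute_sub_smul_one_iff : Commute z (g - l • 1) ↔ Commute z g :=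
  ⟨fun h => by simpa using h.add_right ((Commute.one_right z).smul_right l),
    fun h => h.sub_right ((Commute.one_right z).smul_right l)⟩

variable (hQA : er.HasQA) (hCV : er.HasCV) (hscal : er.IsRealCone)
include hQA hCV hscal

theorem IsPosPart.isJordanDecomp {a q : R} (hh : h ∈ er.G) (ha : er.IsPosPart h a)
    (hq : er.IsCarrier a q) : er.IsJordanDecomp h a (a - h) q := by
  obtain ⟨haG, m, ⟨-, hm₀, hmm⟩, hsum⟩ := ha
  have hm : m ∈ er.Epos := by simpa [le] using hm₀
  have hmm' : m * m = h * h := by simpa [pow_two] using hmm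
  have hcomm {z} (hz : z ∈ er.G) (hzh : Commute z h) : Commute z m :=
    commute_of_mul_self_eq hQA hCV hscal hh hm hmm' hz hzh
  have ha : a = (1 / 2 : ℝ) • (m + h) := by rw [← hsum]; module
  have hab : a * (a - h) = 0 := by
    have e : (m + h) * (m - h) = 0 := by
      rw [add_mul, mul_sub, mul_sub, hmm', (hcomm hh (Commute.refl h)).eq, sub_add_sub_cancel,
        sub_self]
    rw [show a - h = (1 / 2 : ℝ) • (m - h) by rw [ha]; module, ha, smul_mul_smul_comm, e,
      smul_zero]
  obtain ⟨ha₀, hb₀⟩ := hq.mem_Epos_of_mul_eq_zero hQA haG (sub_mem_G haG hh) hab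
    (by rwa [← add_sub_assoc, hsum, add_sub_cancel_right])
  refine ⟨ha₀, hb₀, sub_sub_cancel a h, hab, hq, fun z hz hzh => ?_⟩
  rw [ha]
  exact ((hcomm hz hzh).add_right hzh).smul_right _

theorem IsSpecProj.exists_isJordanDecomp {p : R} (hg : g ∈ er.G) (hp : er.IsSpecProj g l p) :
    ∃ a b q, er.IsJordanDecomp (g - l • 1) a b q ∧ p = 1 - q := by
  obtain ⟨a, ha, q, hq, rfl⟩ := hp
  exact ⟨a, _, q, ha.isJordanDecomp hQA hCV hscal
    (sub_mem_G hg (hscal.smul_mem_G l one_mem_G)) hq, rfl⟩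

end Spectral

section Levels

variable {R : Type*} [Ring R] [Algebra ℝ R] {er : ERing R} {g z : R}
  {a₁ b₁ q₁ a₂ b₂ q₂ : R} {l₁ l₂ : ℝ}
  (d₁ : er.IsJordanDecomp (g - l₁ • 1) a₁ b₁ q₁) (d₂ : er.IsJordanDecomp (g - l₂ • 1) a₂ b₂ q₂)
  (hQA : er.HasQA)
include d₁ d₂ hQA

namespace IsJordanDecomp

/-- With `A = a₂ (1 - q₁)`, one computes `A² + a₂ b₁ + (l₂ - l₁) A = 0`, a sum of positives. -/
theorem proj_mul_one_sub_proj_of_le (hscal : er.IsRealCone) (hl : l₁ ≤ l₂) :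
    q₂ * (1 - q₁) = 0 := by
  have ha₂G := mem_G_of_mem_Epos d₂.pos_mem
  have hb₁G := mem_G_of_mem_Epos d₁.neg_mem
  have hr := d₁.carrier.isIdempotentElem.one_sub
  have ha₂r : Commute a₂ (1 - q₁) := (Commute.one_right a₂).sub_right <|
    d₁.commute_proj hQA ha₂G <| commute_sub_smul_one_iff.2 <|
      commute_sub_smul_one_iff.1 d₂.pos_commute
  have hb₁a₂ : Commute b₁ a₂ := d₂.commute_pos b₁ hb₁G <| commute_sub_smul_one_iff.2 <|
    commute_sub_smul_one_iff.1 d₁.neg_commute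
  set A := a₂ * (1 - q₁)
  have hAG : A ∈ er.G := hscal.mul_mem_G ha₂G d₁.carrier.one_sub_mem_G ha₂r
  have hA : A ∈ er.Epos := mul_mem_Epos d₂.pos_mem d₁.carrier.one_sub_mem_Epos ha₂r
  have hh₁r : (g - l₁ • 1) * (1 - q₁) = -b₁ := by
    rw [← d₁.sub_eq, sub_mul, d₁.carrier.mul_one_sub_eq_zero, mul_sub, mul_one,
      d₁.neg_mul_proj hQA, zero_sub, sub_zero]
  have hsum : A * A + (a₂ * b₁ + (l₂ - l₁) • A) = 0 := by
    have e : A * A = a₂ * a₂ * (1 - q₁) := by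
      simp only [A, mul_assoc, ← mul_assoc (1 - q₁) a₂, ← ha₂r.eq, hr.eq]
    have e₂ : a₂ * a₂ = a₂ * (g - l₂ • 1) := by
      rw [← d₂.sub_eq, mul_sub, d₂.mul_eq_zero, sub_zero]
    have e₃ : (g - l₂ • 1) * (1 - q₁) = -b₁ - (l₂ - l₁) • (1 - q₁) := by
      rw [show g - l₂ • (1 : R) = (g - l₁ • 1) - (l₂ - l₁) • 1 by module, sub_mul, hh₁r,
        smul_mul_assoc, one_mul]
    rw [e, e₂, mul_assoc, e₃, mul_sub, mul_neg, mul_smul_comm]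
    abel
  obtain ⟨hAA, -⟩ := eq_zero_of_add_eq_zero (mul_self_mem_Epos hAG)
    (add_mem_Epos (mul_mem_Epos d₂.pos_mem d₁.neg_mem hb₁a₂.symm)
      (hscal.smul_mem_Epos (sub_nonneg.2 hl) hA)) hsum
  exact (d₂.carrier.2 _ d₁.carrier.one_sub_mem_G).1 (hQA.eq_zero_of_mul_self_eq_zero hAG hAA)

theorem proj_mul_proj_of_le (hscal : er.IsRealCone) (hl : l₁ ≤ l₂) :
    q₂ * q₁ = q₂ ∧ q₁ * q₂ = q₂ := by
  have h := d₁.proj_mul_one_sub_proj_of_le d₂ hQA hscal hl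
  refine ⟨by simpa [mul_sub, sub_eq_zero, eq_comm] using h, ?_⟩
  simpa [sub_mul, sub_eq_zero, eq_comm] using
    hQA.mul_eq_zero_comm d₂.carrier.mem_G d₁.carrier.one_sub_mem_G h

theorem isIdempotentElem_proj_sub_proj (hscal : er.IsRealCone) (hl : l₁ ≤ l₂) :
    IsIdempotentElem (q₁ - q₂) :=
  have h := d₁.proj_mul_proj_of_le d₂ hQA hscal hl
  d₂.carrier.isIdempotentElem.sub d₁.carrier.isIdempotentElem h.1 h.2

theorem commute_proj_sub_proj (hz : z ∈ er.G) (hzg : Commute z g) : Commute z (q₁ - q₂) :=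
  (d₁.commute_proj hQA hz (commute_sub_smul_one_iff.2 hzg)).sub_right
    (d₂.commute_proj hQA hz (commute_sub_smul_one_iff.2 hzg))

theorem smul_le_mul_proj_sub_proj (hscal : er.IsRealCone) (hl : l₁ ≤ l₂) :
    er.le (l₁ • (q₁ - q₂)) (g * (q₁ - q₂)) := by
  have hu := mem_Epos_of_isIdempotentElem (sub_mem_G d₁.carrier.mem_G d₂.carrier.mem_G)
    (d₁.isIdempotentElem_proj_sub_proj d₂ hQA hscal hl)
  have hb₁u : b₁ * (q₁ - q₂) = 0 := by
    rw [mul_sub, ← (d₁.proj_mul_proj_of_le d₂ hQA hscal hl).2, ← mul_assoc, d₁.neg_mul_proj hQA,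
      zero_mul, sub_zero]
  have e : g * (q₁ - q₂) - l₁ • (q₁ - q₂) = a₁ * (q₁ - q₂) := calc
    _ = (g - l₁ • 1) * (q₁ - q₂) := by rw [sub_mul, smul_mul_assoc, one_mul]
    _ = a₁ * (q₁ - q₂) := by rw [← d₁.sub_eq, sub_mul, hb₁u, sub_zero]
  rw [le, e]
  exact mul_mem_Epos d₁.pos_mem hu <| d₁.commute_proj_sub_proj d₂ hQA
    (mem_G_of_mem_Epos d₁.pos_mem) (commute_sub_smul_one_iff.1 d₁.pos_commute)

theorem mul_proj_sub_proj_le_smul (hscal : er.IsRealCone) (hl : l₁ ≤ l₂) :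
    er.le (g * (q₁ - q₂)) (l₂ • (q₁ - q₂)) := by
  have hu := mem_Epos_of_isIdempotentElem (sub_mem_G d₁.carrier.mem_G d₂.carrier.mem_G)
    (d₁.isIdempotentElem_proj_sub_proj d₂ hQA hscal hl)
  have ha₂u : a₂ * (q₁ - q₂) = 0 := by
    rw [mul_sub, ← (d₁.proj_mul_proj_of_le d₂ hQA hscal hl).1, ← mul_assoc,
      d₂.carrier.mul_eq_self, sub_self]
  have e : l₂ • (q₁ - q₂) - g * (q₁ - q₂) = b₂ * (q₁ - q₂) := calc
    _ = -((g - l₂ • 1) * (q₁ - q₂)) := by rw [sub_mul, smul_mul_assoc, one_mul, neg_sub]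
    _ = b₂ * (q₁ - q₂) := by rw [← d₂.sub_eq, sub_mul, ha₂u, zero_sub, neg_neg]
  rw [le, e]
  exact mul_mem_Epos d₂.neg_mem hu <| d₁.commute_proj_sub_proj d₂ hQA
    (mem_G_of_mem_Epos d₂.neg_mem) (commute_sub_smul_one_iff.1 d₂.neg_commute)

end IsJordanDecomp

end Levels

section Endpoints

variable {R : Type*} [Ring R] {er : ERing R} {h a b q : R}

theorem IsJordanDecomp.proj_eq_zero_of_nonpos (hQA : er.HasQA)
    (d : er.IsJordanDecomp h a b q) (hh : er.le h 0) : q = 0 := by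
  have haa : a * a = a * h := by rw [← d.sub_eq, mul_sub, d.mul_eq_zero, sub_zero]
  have hneg : -(a * a) ∈ er.Epos := by
    rw [haa, ← mul_neg]
    exact mul_mem_Epos d.pos_mem (by simpa [le] using hh) d.pos_commute.neg_right
  have ha : a = 0 := hQA.eq_zero_of_mul_self_eq_zero (mem_G_of_mem_Epos d.pos_mem)
    (eq_zero_of_mem_Epos_of_neg_mem (mul_self_mem_Epos (mem_G_of_mem_Epos d.pos_mem)) hneg)
  have hqq : q * q = 0 := (d.carrier.2 q d.carrier.mem_G).1 (by rw [ha, zero_mul])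
  rw [← d.carrier.isIdempotentElem.eq, hqq]

variable [Algebra ℝ R]

/-- Compressing `a - δ ≥ 0` by `1 - q`, which kills `a`, gives `-δ (1 - q) ≥ 0`. -/
theorem IsJordanDecomp.proj_eq_one_of_smul_one_le (hQA : er.HasQA) (hscal : er.IsRealCone)
    (d : er.IsJordanDecomp h a b q) {δ : ℝ} (hδ : 0 < δ) (hh : er.le (δ • 1) h) : q = 1 := by
  have ha : a - δ • 1 ∈ er.Epos := by
    rw [show a - δ • (1 : R) = (h - δ • 1) + b by rw [← d.sub_eq]; abel]
    exact add_mem_Epos hh d.neg_mem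
  have hr := d.carrier.isIdempotentElem.one_sub
  have e : (1 - q) * (a - δ • 1) * (1 - q) = -(δ • (1 - q)) := by
    rw [mul_sub (1 - q) a, d.carrier.one_sub_mul_eq_zero hQA (mem_G_of_mem_Epos d.pos_mem),
      zero_sub, mul_smul_comm, mul_one, neg_mul, smul_mul_assoc, hr.eq]
  have h₀ := eq_zero_of_mem_Epos_of_neg_mem (hscal.smul_mem_Epos hδ.le d.carrier.one_sub_mem_Epos)
    (e ▸ mul_mul_self_mem_Epos d.carrier.one_sub_mem_Epos ha)
  rw [smul_eq_zero, sub_eq_zero] at h₀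
  exact (h₀.resolve_left hδ.ne').symm

end Endpoints

section SpectralResolution

variable {R : Type*} [Ring R] [Algebra ℝ R] {er : ERing R} {g p p₁ p₂ : R} {l l₁ l₂ : ℝ}
  (hQA : er.HasQA) (hCV : er.HasCV) (hscal : er.IsRealCone) (hg : g ∈ er.G)
include hQA hCV hscal hg

theorem IsSpecProj.eq_zero_of_lt_specL (hp : er.IsSpecProj g l p) (hl : l < er.specL g) :
    p = 0 := by
  obtain ⟨a, b, q, d, rfl⟩ := hp.exists_isJordanDecomp hQA hCV hscal hg
  obtain ⟨l', hl', hll'⟩ := exists_lt_of_lt_csSup (exists_smul_one_le hg) hl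
  rw [d.proj_eq_one_of_smul_one_le hQA hscal (sub_pos.2 hll') ?_, sub_self]
  rwa [le, show g - l • (1 : R) - (l' - l) • 1 = g - l' • 1 by module]

theorem IsSpecProj.eq_one_of_specU_lt (hp : er.IsSpecProj g l p) (hl : er.specU g < l) :
    p = 1 := by
  obtain ⟨a, b, q, d, rfl⟩ := hp.exists_isJordanDecomp hQA hCV hscal hg
  obtain ⟨l', hl', hl'l⟩ := exists_lt_of_csInf_lt (exists_le_smul_one hg) hl
  rw [d.proj_eq_zero_of_nonpos hQA ?_, sub_zero]
  rw [le, show (0 : R) - (g - l • 1) = (l' • 1 - g) + (l - l') • 1 by module]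
  exact add_mem_Epos hl' (hscal.smul_mem_Epos (sub_nonneg.2 hl'l.le) one_mem_Epos)

variable (hp₁ : er.IsSpecProj g l₁ p₁) (hp₂ : er.IsSpecProj g l₂ p₂)
include hp₁ hp₂

theorem IsSpecProj.sub_mem_P (hl : l₁ ≤ l₂) : p₂ - p₁ ∈ er.P := by
  obtain ⟨a₁, b₁, q₁, d₁, rfl⟩ := hp₁.exists_isJordanDecomp hQA hCV hscal hg
  obtain ⟨a₂, b₂, q₂, d₂, rfl⟩ := hp₂.exists_isJordanDecomp hQA hCV hscal hg
  rw [sub_sub_sub_cancel_left]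
  exact mem_P_of_isIdempotentElem (sub_mem_G d₁.carrier.mem_G d₂.carrier.mem_G)
    (d₁.isIdempotentElem_proj_sub_proj d₂ hQA hscal hl)

theorem IsSpecProj.sub_mem_CC : p₂ - p₁ ∈ er.CC {g} := by
  obtain ⟨a₁, b₁, q₁, d₁, rfl⟩ := hp₁.exists_isJordanDecomp hQA hCV hscal hg
  obtain ⟨a₂, b₂, q₂, d₂, rfl⟩ := hp₂.exists_isJordanDecomp hQA hCV hscal hg
  rw [sub_sub_sub_cancel_left]
  exact ⟨sub_mem_G d₁.carrier.mem_G d₂.carrier.mem_G, fun z ⟨hz, hzg⟩ =>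
    (d₁.commute_proj_sub_proj d₂ hQA hz (hzg g rfl)).symm⟩

theorem IsSpecProj.smul_le_mul_sub (hl : l₁ ≤ l₂) :
    er.le (l₁ • (p₂ - p₁)) (g * (p₂ - p₁)) := by
  obtain ⟨a₁, b₁, q₁, d₁, rfl⟩ := hp₁.exists_isJordanDecomp hQA hCV hscal hg
  obtain ⟨a₂, b₂, q₂, d₂, rfl⟩ := hp₂.exists_isJordanDecomp hQA hCV hscal hg
  rw [sub_sub_sub_cancel_left]
  exact d₁.smul_le_mul_proj_sub_proj d₂ hQA hscal hl

theorem IsSpecProj.mul_sub_le_smul (hl : l₁ ≤ l₂) :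
    er.le (g * (p₂ - p₁)) (l₂ • (p₂ - p₁)) := by
  obtain ⟨a₁, b₁, q₁, d₁, rfl⟩ := hp₁.exists_isJordanDecomp hQA hCV hscal hg
  obtain ⟨a₂, b₂, q₂, d₂, rfl⟩ := hp₂.exists_isJordanDecomp hQA hCV hscal hg
  rw [sub_sub_sub_cancel_left]
  exact d₁.mul_proj_sub_proj_le_smul d₂ hQA hscal hl

end SpectralResolution

section Approximation

variable {R : Type*} [Ring R] [Algebra ℝ R] {er : ERing R}

theorem norm1_le {x : R} {ε : ℝ} (hε : 0 ≤ ε) (h₁ : er.le (-(ε • 1)) x) (h₂ : er.le x (ε • 1)) :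
    er.norm1 x ≤ ε :=
  csInf_le ⟨0, fun _ h => h.1⟩ ⟨hε, h₁, h₂⟩

theorem norm1_sub_sum_smul_le {ι : Type*} {s : Finset ι} {g : R} {u : ι → R} {γ : ι → ℝ}
    {ε : ℝ} (hε : 0 ≤ ε) (hu : ∑ i ∈ s, u i = 1)
    (hlo : ∀ i ∈ s, er.le ((γ i - ε) • u i) (g * u i))
    (hhi : ∀ i ∈ s, er.le (g * u i) ((γ i + ε) • u i)) :
    er.norm1 (g - ∑ i ∈ s, γ i • u i) ≤ ε := by
  refine norm1_le hε ?_ ?_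
  · rw [le]
    convert sum_mem_Epos (f := fun i => g * u i - (γ i - ε) • u i) hlo using 1
    simp only [sub_smul, Finset.sum_sub_distrib, ← Finset.mul_sum, ← Finset.smul_sum, hu, mul_one]
    abel
  · rw [le]
    convert sum_mem_Epos (f := fun i => (γ i + ε) • u i - g * u i) hhi using 1
    simp only [add_smul, Finset.sum_sub_distrib, Finset.sum_add_distrib, ← Finset.mul_sum,
      ← Finset.smul_sum, hu, mul_one]
    abel

end Approximation

end ERing

theorem Finset.sum_Icc_one_sub_pred {M : Type*} [AddCommGroup M] (f : ℕ → M) (n : ℕ) :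
    ∑ i ∈ Finset.Icc 1 n, (f i - f (i - 1)) = f n - f 0 := by
  induction n with
  | zero => simp
  | succ n ih => rw [Finset.sum_Icc_succ_top (by omega), ih, Nat.add_sub_cancel]; abel

theorem stmt16_general {R : Type*} [Ring R] [Algebra ℝ R] (er : ERing R) (hAH : er.IsAH)
    (hscal : ∀ l : ℝ, 0 ≤ l → ∀ a ∈ er.Epos, l • a ∈ er.Epos)
    (g : R) (hg : g ∈ er.G) (p : ℝ → R)
    (hp : ∀ l : ℝ, er.IsSpecProj g l (p l))
    (n : ℕ) (lam gam : ℕ → ℝ)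
    (h0 : lam 0 < er.specL g) (h1 : er.specL g < lam 1)
    (hchain : ∀ i, 1 ≤ i → i + 1 < n → lam i < lam (i + 1))
    (h2 : lam (n - 1) < er.specU g) (h3 : er.specU g < lam n)
    (hgam : ∀ i, 1 ≤ i → i ≤ n → lam (i - 1) ≤ gam i ∧ gam i ≤ lam i)
    (eps : ℝ)
    (heps : IsGreatest {x : ℝ | ∃ i, 1 ≤ i ∧ i ≤ n ∧ x = lam i - lam (i - 1)} eps) :
    (∀ i, 1 ≤ i → i ≤ n →
      (p (lam i) - p (lam (i - 1))) ∈ er.P ∧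
      (p (lam i) - p (lam (i - 1))) ∈ er.CC {g}) ∧
    (∑ i ∈ Finset.Icc 1 n, (p (lam i) - p (lam (i - 1)))) = 1 ∧
    er.norm1 (g - ∑ i ∈ Finset.Icc 1 n,
      gam i • (p (lam i) - p (lam (i - 1)))) ≤ eps := by
  obtain ⟨-, hQA, hCV⟩ := hAH
  have hlam i (hi : 1 ≤ i) (hin : i ≤ n) : lam (i - 1) ≤ lam i := by
    obtain rfl | hi' := eq_or_lt_of_le hi
    · exact (h0.trans h1).le
    obtain rfl | hin' := eq_or_lt_of_le hin
    · exact (h2.trans h3).le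
    simpa [Nat.sub_add_cancel hi] using (hchain (i - 1) (by omega) (by omega)).le
  have hP i (hi : 1 ≤ i) (hin : i ≤ n) : p (lam i) - p (lam (i - 1)) ∈ er.P :=
    (hp (lam (i - 1))).sub_mem_P hQA hCV hscal hg (hp (lam i)) (hlam i hi hin)
  have hsum : ∑ i ∈ Finset.Icc 1 n, (p (lam i) - p (lam (i - 1))) = 1 := by
    rw [Finset.sum_Icc_one_sub_pred (fun i => p (lam i)),
      (hp _).eq_one_of_specU_lt hQA hCV hscal hg h3,
      (hp _).eq_zero_of_lt_specL hQA hCV hscal hg h0, sub_zero]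
  obtain ⟨i₀, hi₀, hi₀n, heps₀⟩ := heps.1
  refine ⟨fun i hi hin => ⟨hP i hi hin, (hp _).sub_mem_CC hQA hCV hscal hg (hp _)⟩, hsum,
    ERing.norm1_sub_sum_smul_le (by linarith [hlam i₀ hi₀ hi₀n]) hsum (fun i hi => ?_)
      (fun i hi => ?_)⟩
  all_goals
    obtain ⟨hi, hin⟩ := Finset.mem_Icc.1 hi
    have hε := heps.2 ⟨i, hi, hin, rfl⟩
    have hu := ERing.mem_Epos_of_mem_P (hP i hi hin)
    obtain ⟨hγ₁, hγ₂⟩ := hgam i hi hin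
  · exact (ERing.IsRealCone.smul_le_smul hscal (by linarith) hu).trans
      ((hp _).smul_le_mul_sub hQA hCV hscal hg (hp _) (hlam i hi hin))
  · exact ((hp _).mul_sub_le_smul hQA hCV hscal hg (hp _) (hlam i hi hin)).trans
      (ERing.IsRealCone.smul_le_smul hscal (by linarith) hu)

/-- Spectral approximation: given a partition
`λ₀ < L < λ₁ < ⋯ < λ_{n−1} < U < λ_n` and `λ_{i−1} ≤ γ_i ≤ λ_i`, the differences
`u_i := p_{λ_i} − p_{λ_{i−1}}` lie in `P ∩ CC(g)`, sum to `1`, and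
`‖g − Σ γ_i u_i‖ ≤ ε` where `ε = max (λ_i − λ_{i−1})`. -/
theorem stmt16 {R : Type*} [Ring R] [Algebra ℝ R] (er : ERing R) (hAH : er.IsAH)
    (hscal : ∀ l : ℝ, 0 ≤ l → ∀ a ∈ er.Epos, l • a ∈ er.Epos)
    (g : R) (hg : g ∈ er.G) (p : ℝ → R)
    (hp : ∀ l : ℝ, er.IsSpecProj g l (p l))
    (n : ℕ) (hn : 1 ≤ n) (lam gam : ℕ → ℝ)
    (h0 : lam 0 < er.specL g) (h1 : er.specL g < lam 1)
    (hchain : ∀ i, 1 ≤ i → i + 1 < n → lam i < lam (i + 1))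
    (h2 : lam (n - 1) < er.specU g) (h3 : er.specU g < lam n)
    (hgam : ∀ i, 1 ≤ i → i ≤ n → lam (i - 1) ≤ gam i ∧ gam i ≤ lam i)
    (eps : ℝ)
    (heps : IsGreatest {x : ℝ | ∃ i, 1 ≤ i ∧ i ≤ n ∧ x = lam i - lam (i - 1)} eps) :
    (∀ i, 1 ≤ i → i ≤ n →
      (p (lam i) - p (lam (i - 1))) ∈ er.P ∧
      (p (lam i) - p (lam (i - 1))) ∈ er.CC {g}) ∧
    (∑ i ∈ Finset.Icc 1 n, (p (lam i) - p (lam (i - 1)))) = 1 ∧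
    er.norm1 (g - ∑ i ∈ Finset.Icc 1 n,
      gam i • (p (lam i) - p (lam (i - 1)))) ≤ eps :=
  stmt16_general er hAH hscal g hg p hp n lam gam h0 h1 hchain h2 h3 hgam eps heps
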